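/- For all real numbers q > 1 and m > −1, Σ_{i=0}^{∞} Σ_{j=0}^{∞} P_m(i,j)² · π_m(i)/π_m(j) = q²/(q²−1); that is, the Hilbert–Schmidt norm of the operator P_m on ℓ²(π_m) equals (1 − q^{−2})^{−1/2}. -/

import Mathlib

/-!
Detailed balance `π(i) P(i,i+1) = π(i+1) P(i+1,i)` makes each term `P(i,j)² π(i)/π(j)` equal to
`P(i,j) P(j,i)`, so the double sum is the trace of `P_m²`. As `P_m` is tridiagonal this trace is
`Σ P(i,i)² + 2 Σ P(i,i+1) P(i+1,i)`, and in `y = q^{-i}` both summands are combinations of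
`y², y³, y⁴`: the sums are geometric, and the dependence on `m` cancels in the total `1/(1 - q^{-2})`.
-/

noncomputable section

/-- The tridiagonal transition matrix `P_m` for real `q > 1`, `m > -1`. -/
def Pm (q m : ℝ) (i j : ℕ) : ℝ :=
  if j = i + 1 then q ^ (-1 - 2 * (i : ℝ) - m)
  else if j = i then
    1 - (1 - q ^ (-(i : ℝ))) * (1 - q ^ (-m - (i : ℝ))) - q ^ (-1 - 2 * (i : ℝ) - m)
  else if i = j + 1 then (1 - q ^ (-(i : ℝ))) * (1 - q ^ (-m - (i : ℝ)))
  else 0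

/-- Unnormalized weight `q^{-i(i+m)} / (η_i(q)·∏_{j=1}^{i}(1-q^{-m-j}))`. -/
def piWt (q m : ℝ) (i : ℕ) : ℝ :=
  q ^ (-((i : ℝ) * ((i : ℝ) + m))) /
    ((∏ j ∈ Finset.range i, (1 - q ^ (-((j : ℝ) + 1)))) *
      ∏ j ∈ Finset.range i, (1 - q ^ (-m - ((j : ℝ) + 1))))

/-- The stationary distribution `π_m`, normalized so that it sums to `1`. -/
def piM (q m : ℝ) (i : ℕ) : ℝ := (∑' k : ℕ, piWt q m k)⁻¹ * piWt q m i

def IsTridiagonal (P : ℕ → ℕ → ℝ) : Prop := ∀ ⦃i j : ℕ⦄, i + 1 < j → P i j = 0 ∧ P j i = 0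

namespace IsTridiagonal

variable {P : ℕ → ℕ → ℝ}

theorem mul_eq_mul_of_balance {w : ℕ → ℝ} (hP : IsTridiagonal P)
    (hb : ∀ i, w i * P i (i + 1) = w (i + 1) * P (i + 1) i) (i j : ℕ) :
    w i * P i j = w j * P j i := by
  obtain h | rfl | rfl | rfl | h :
      i + 1 < j ∨ j = i + 1 ∨ j = i ∨ i = j + 1 ∨ j + 1 < i := by omega
  · simp [(hP h).1, (hP h).2]
  · exact hb i
  · rfl
  · exact (hb j).symm
  · simp [(hP h).1, (hP h).2]

theorem tsum_mul_swap_zero (hP : IsTridiagonal P) :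
    ∑' j, P 0 j * P j 0 = P 0 0 ^ 2 + P 0 1 * P 1 0 := by
  rw [tsum_eq_sum (s := {0, 1}), Finset.sum_pair zero_ne_one, sq]
  intro j hj
  simp only [Finset.mem_insert, Finset.mem_singleton, not_or] at hj
  simp [(hP (by omega : 0 + 1 < j)).1]

theorem tsum_mul_swap_succ (hP : IsTridiagonal P) (i : ℕ) :
    ∑' j, P (i + 1) j * P j (i + 1) =
      P (i + 1) (i + 1) ^ 2 + P (i + 1) (i + 1 + 1) * P (i + 1 + 1) (i + 1) +
        P i (i + 1) * P (i + 1) i := by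
  rw [tsum_eq_sum (s := {i, i + 1, i + 1 + 1})]
  · rw [Finset.sum_insert (by simp only [Finset.mem_insert, Finset.mem_singleton]; omega),
      Finset.sum_pair (by omega)]
    ring
  intro j hj
  simp only [Finset.mem_insert, Finset.mem_singleton, not_or] at hj
  obtain h | h : i + 1 + 1 < j ∨ j + 1 < i + 1 := by omega
  · simp [(hP h).1]
  · simp [(hP h).2]

theorem tsum_tsum_mul_swap (hP : IsTridiagonal P) {S T : ℝ}
    (hS : HasSum (fun i => P i i ^ 2) S) (hT : HasSum (fun i => P i (i + 1) * P (i + 1) i) T) :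
    ∑' i, ∑' j, P i j * P j i = S + 2 * T := by
  refine HasSum.tsum_eq ((hasSum_nat_add_iff' 1).mp ?_)
  simp only [hP.tsum_mul_swap_succ, Finset.sum_range_one, hP.tsum_mul_swap_zero]
  convert (((hasSum_nat_add_iff' 1).mpr hS).add ((hasSum_nat_add_iff' 1).mpr hT)).add hT using 1
  simp only [Finset.sum_range_one, zero_add]
  ring

end IsTridiagonal

theorem sq_mul_div_eq_mul_of_mul_eq {a b u v : ℝ} (h : u * a = v * b) (hv : v ≠ 0) :
    a ^ 2 * (u / v) = a * b := by
  field_simp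
  linear_combination a * h

theorem hasSum_geometric_sq_cube_pow_four {x : ℝ} (h0 : 0 ≤ x) (h1 : x < 1) (α β γ : ℝ) :
    HasSum (fun i : ℕ => α * (x ^ i) ^ 2 + β * (x ^ i) ^ 3 + γ * (x ^ i) ^ 4)
      (α / (1 - x ^ 2) + β / (1 - x ^ 3) + γ / (1 - x ^ 4)) := by
  have geom (k : ℕ) (hk : k ≠ 0) : HasSum (fun i : ℕ => (x ^ i) ^ k) (1 - x ^ k)⁻¹ := by
    simpa only [← pow_mul, mul_comm k] using
      hasSum_geometric_of_lt_one (pow_nonneg h0 k) (pow_lt_one₀ h0 h1 hk)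
  simpa only [div_eq_mul_inv] using
    (((geom 2 two_ne_zero).mul_left α).add ((geom 3 three_ne_zero).mul_left β)).add
      ((geom 4 four_ne_zero).mul_left γ)

theorem rpow_neg_natCast_eq_inv_pow (x : ℝ) (n : ℕ) : x ^ (-(n : ℝ)) = x⁻¹ ^ n := by
  rw [Real.rpow_neg_eq_inv_rpow, Real.rpow_natCast]

theorem one_sub_rpow_pos {x s : ℝ} (hx : 1 < x) (hs : s < 0) : 0 < 1 - x ^ s :=
  sub_pos.2 (Real.rpow_lt_one_of_one_lt_of_neg hx hs)

theorem Pm_isTridiagonal (q m : ℝ) : IsTridiagonal (Pm q m) := by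
  intro i j h
  constructor <;> simp only [Pm] <;> split_ifs <;> first | rfl | omega

section Pm

variable {q m : ℝ}

theorem Pm_self_succ (i : ℕ) : Pm q m i (i + 1) = q ^ (-1 - 2 * (i : ℝ) - m) := by
  simp [Pm]

theorem Pm_succ_self (i : ℕ) :
    Pm q m (i + 1) i = (1 - q ^ (-((i : ℝ) + 1))) * (1 - q ^ (-m - ((i : ℝ) + 1))) := by
  simp [Pm, show i ≠ i + 1 + 1 by omega]

theorem Pm_self_succ_eq (hq : 0 < q) (i : ℕ) :
    Pm q m i (i + 1) = q ^ (-m) * q⁻¹ * (q⁻¹ ^ i) ^ 2 := by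
  have : -1 - 2 * (i : ℝ) - m = -m + -((1 : ℕ) : ℝ) + -((2 * i : ℕ) : ℝ) := by push_cast; ring
  rw [Pm_self_succ, this, Real.rpow_add hq, Real.rpow_add hq, rpow_neg_natCast_eq_inv_pow,
    rpow_neg_natCast_eq_inv_pow, pow_one, pow_mul, pow_right_comm]

theorem Pm_succ_self_eq (hq : 0 < q) (i : ℕ) :
    Pm q m (i + 1) i = (1 - q⁻¹ * q⁻¹ ^ i) * (1 - q ^ (-m) * q⁻¹ * q⁻¹ ^ i) := by
  have h := rpow_neg_natCast_eq_inv_pow q (i + 1)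
  push_cast at h
  rw [Pm_succ_self, sub_eq_add_neg (-m), Real.rpow_add hq, h, pow_succ']
  ring

theorem Pm_self_eq (hq : 0 < q) (i : ℕ) :
    Pm q m i i = (1 + q ^ (-m)) * q⁻¹ ^ i - q ^ (-m) * (1 + q⁻¹) * (q⁻¹ ^ i) ^ 2 := by
  have h : Pm q m i i = 1 - (1 - q ^ (-(i : ℝ))) * (1 - q ^ (-m - (i : ℝ))) - Pm q m i (i + 1) := by
    simp [Pm]
  rw [h, Pm_self_succ_eq hq, sub_eq_add_neg (-m), Real.rpow_add hq, rpow_neg_natCast_eq_inv_pow]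
  ring

theorem Pm_succ_self_pos (hq : 1 < q) (hm : -1 < m) (i : ℕ) : 0 < Pm q m (i + 1) i := by
  have hi : (0 : ℝ) ≤ i := i.cast_nonneg
  rw [Pm_succ_self]
  exact mul_pos (one_sub_rpow_pos hq (by linarith)) (one_sub_rpow_pos hq (by linarith))

theorem piWt_pos (hq : 1 < q) (hm : -1 < m) (i : ℕ) : 0 < piWt q m i := by
  have hj (j : ℕ) : (0 : ℝ) ≤ j := j.cast_nonneg
  refine div_pos (Real.rpow_pos_of_pos (by linarith) _) (mul_pos ?_ ?_) <;>
    exact Finset.prod_pos fun j _ => one_sub_rpow_pos hq (by linarith [hj j])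

theorem piWt_mul_Pm_self_succ (hq : 1 < q) (hm : -1 < m) (i : ℕ) :
    piWt q m i * Pm q m i (i + 1) = piWt q m (i + 1) * Pm q m (i + 1) i := by
  have hi : (0 : ℝ) ≤ i := i.cast_nonneg
  have h₁ := (one_sub_rpow_pos hq (by linarith : -((i : ℝ) + 1) < 0)).ne'
  have h₂ := (one_sub_rpow_pos hq (by linarith : -m - ((i : ℝ) + 1) < 0)).ne'
  have hexp : -(((i + 1 : ℕ) : ℝ) * (((i + 1 : ℕ) : ℝ) + m)) =
      -((i : ℝ) * ((i : ℝ) + m)) + (-1 - 2 * (i : ℝ) - m) := by push_cast; ring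
  rw [Pm_self_succ, Pm_succ_self, piWt, piWt, Finset.prod_range_succ, Finset.prod_range_succ, hexp,
    Real.rpow_add (by linarith)]
  field_simp

theorem summable_piWt (hq : 1 < q) (hm : -1 < m) : Summable (piWt q m) := by
  have hq₀ : 0 < q := by linarith
  refine summable_of_ratio_test_tendsto_lt_one zero_lt_one
    (Filter.Eventually.of_forall fun i => (piWt_pos hq hm i).ne') ?_
  have hratio (i : ℕ) : ‖piWt q m (i + 1)‖ / ‖piWt q m i‖ = Pm q m i (i + 1) / Pm q m (i + 1) i := by
    rw [Real.norm_of_nonneg (piWt_pos hq hm _).le, Real.norm_of_nonneg (piWt_pos hq hm _).le,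
      div_eq_div_iff (piWt_pos hq hm i).ne' (Pm_succ_self_pos hq hm i).ne']
    exact (piWt_mul_Pm_self_succ hq hm i).symm.trans (mul_comm _ _)
  simp only [hratio, Pm_self_succ_eq hq₀, Pm_succ_self_eq hq₀]
  have hcont : ContinuousAt (fun y : ℝ => q ^ (-m) * q⁻¹ * y ^ 2 /
      ((1 - q⁻¹ * y) * (1 - q ^ (-m) * q⁻¹ * y))) 0 := by
    fun_prop (disch := norm_num)
  simpa only [Function.comp_def, ne_eq, OfNat.ofNat_ne_zero, not_false_eq_true, zero_pow,
    mul_zero, zero_div] using hcont.tendsto.comp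
    (tendsto_pow_atTop_nhds_zero_of_lt_one (inv_nonneg.2 hq₀.le) (inv_lt_one_of_one_lt₀ hq))

theorem piM_mul_Pm_self_succ (hq : 1 < q) (hm : -1 < m) (i : ℕ) :
    piM q m i * Pm q m i (i + 1) = piM q m (i + 1) * Pm q m (i + 1) i := by
  simp only [piM, mul_assoc, piWt_mul_Pm_self_succ hq hm]

theorem piM_pos (hq : 1 < q) (hm : -1 < m) (i : ℕ) : 0 < piM q m i :=
  mul_pos (inv_pos.2 ((summable_piWt hq hm).tsum_pos (fun k => (piWt_pos hq hm k).le) 0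
    (piWt_pos hq hm 0))) (piWt_pos hq hm i)

theorem hasSum_Pm_self_sq (hq : 1 < q) :
    HasSum (fun i => Pm q m i i ^ 2)
      ((1 + q ^ (-m)) ^ 2 / (1 - q⁻¹ ^ 2) +
        -(2 * q ^ (-m) * (1 + q ^ (-m)) * (1 + q⁻¹)) / (1 - q⁻¹ ^ 3) +
        (q ^ (-m) * (1 + q⁻¹)) ^ 2 / (1 - q⁻¹ ^ 4)) := by
  convert hasSum_geometric_sq_cube_pow_four (inv_nonneg.2 (by linarith : (0 : ℝ) ≤ q))
    (inv_lt_one_of_one_lt₀ hq) _ _ _ using 2 with i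
  rw [Pm_self_eq (by linarith)]
  ring

theorem hasSum_Pm_self_succ_mul_Pm_succ_self (hq : 1 < q) :
    HasSum (fun i => Pm q m i (i + 1) * Pm q m (i + 1) i)
      (q ^ (-m) * q⁻¹ / (1 - q⁻¹ ^ 2) + -(q ^ (-m) * (1 + q ^ (-m)) * q⁻¹ ^ 2) / (1 - q⁻¹ ^ 3) +
        (q ^ (-m)) ^ 2 * q⁻¹ ^ 3 / (1 - q⁻¹ ^ 4)) := by
  convert hasSum_geometric_sq_cube_pow_four (inv_nonneg.2 (by linarith : (0 : ℝ) ≤ q))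
    (inv_lt_one_of_one_lt₀ hq) _ _ _ using 2 with i
  rw [Pm_self_succ_eq (by linarith), Pm_succ_self_eq (by linarith)]
  ring

end Pm

theorem geometric_sums_eq_sq_div_sq_sub_one {q : ℝ} (hq : 1 < q) (A : ℝ) :
    (1 + A) ^ 2 / (1 - q⁻¹ ^ 2) + -(2 * A * (1 + A) * (1 + q⁻¹)) / (1 - q⁻¹ ^ 3) +
        (A * (1 + q⁻¹)) ^ 2 / (1 - q⁻¹ ^ 4) +
      2 * (A * q⁻¹ / (1 - q⁻¹ ^ 2) + -(A * (1 + A) * q⁻¹ ^ 2) / (1 - q⁻¹ ^ 3) +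
        A ^ 2 * q⁻¹ ^ 3 / (1 - q⁻¹ ^ 4)) = q ^ 2 / (q ^ 2 - 1) := by
  have h2 : q ^ 2 - 1 ≠ 0 := (sub_pos.2 (one_lt_pow₀ hq two_ne_zero)).ne'
  have h3 : q ^ 3 - 1 ≠ 0 := (sub_pos.2 (one_lt_pow₀ hq three_ne_zero)).ne'
  have h4 : q ^ 4 - 1 ≠ 0 := (sub_pos.2 (one_lt_pow₀ hq four_ne_zero)).ne'
  field_simp
  ring

theorem sqrt_sq_div_sq_sub_one {q : ℝ} (hq : 1 < q) :
    √(q ^ 2 / (q ^ 2 - 1)) = (1 - q ^ (-2 : ℝ)) ^ (-(1 / 2) : ℝ) := by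
  have hq₀ : 0 < q := by linarith
  have hsq : 1 - q ^ (-2 : ℝ) = (q ^ 2 - 1) / q ^ 2 := by
    rw [Real.rpow_neg hq₀.le, Real.rpow_two]
    field_simp
  rw [hsq, Real.rpow_neg (div_nonneg (by nlinarith) (by positivity)), ← Real.sqrt_eq_rpow,
    ← Real.sqrt_inv, inv_div]

/-- `Σ_i Σ_j P_m(i,j)²·π_m(i)/π_m(j) = q²/(q²−1)`; that is, the
Hilbert–Schmidt norm of `P_m` on `ℓ²(π_m)` equals `(1 − q^{-2})^{-1/2}`. -/
theorem stmt6 (q m : ℝ) (hq : 1 < q) (hm : -1 < m) :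
    (∑' i : ℕ, ∑' j : ℕ, Pm q m i j ^ 2 * (piM q m i / piM q m j)) = q ^ 2 / (q ^ 2 - 1) ∧
    Real.sqrt (∑' i : ℕ, ∑' j : ℕ, Pm q m i j ^ 2 * (piM q m i / piM q m j))
      = (1 - q ^ (-2 : ℝ)) ^ (-(1 / 2) : ℝ) := by
  have hrev (i j : ℕ) : Pm q m i j ^ 2 * (piM q m i / piM q m j) = Pm q m i j * Pm q m j i :=
    sq_mul_div_eq_mul_of_mul_eq
      ((Pm_isTridiagonal q m).mul_eq_mul_of_balance (piM_mul_Pm_self_succ hq hm) i j)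
      (piM_pos hq hm j).ne'
  have htrace : ∑' i : ℕ, ∑' j : ℕ, Pm q m i j ^ 2 * (piM q m i / piM q m j) =
      q ^ 2 / (q ^ 2 - 1) := by
    simp only [hrev]
    rw [(Pm_isTridiagonal q m).tsum_tsum_mul_swap (hasSum_Pm_self_sq hq)
      (hasSum_Pm_self_succ_mul_Pm_succ_self hq)]
    exact geometric_sums_eq_sq_div_sq_sub_one hq _
  exact ⟨htrace, htrace ▸ sqrt_sq_div_sq_sub_one hq⟩
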